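/- Let m, n be positive integers, A ∈ ℝ^{m×n}, b ∈ ℝ^m, and let L be a natural number with 0 < L < m. Suppose A satisfies the 1-Absolute Range Property of order L for some ψ ∈ (0,1). Then for all x, y ∈ ℝ^n: ‖|Ax| − |Ay|‖₁ ≤ ((1+ψ)/(1−ψ)) · ( ‖|Ax| − b‖₁ − ‖|Ay| − b‖₁ + 2·σ¹_L(y) ). -/

import Mathlib

open Finset

/-- `sigmaL L v` : the minimum over subsets `T` of cardinality `L` of the sum of `|v i|`
over the complement of `T`, i.e. the sum of all but the `L` largest entries of `|v|`. -/
noncomputable def sigmaL {m : ℕ} (L : ℕ) (v : Fin m → ℝ) : ℝ :=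
  ⨅ T : {T : Finset (Fin m) // T.card = L}, ∑ i ∈ (T : Finset (Fin m))ᶜ, |v i|

/-!
Choose `T` of size `L` on which `|Ay| - b` carries its `L` largest entries, so that the sum
off `T` is `σ_L(y)`. The triangle inequality, on `T` and off `T`, gives
`‖(|Ax| - |Ay|)_{Tᶜ}‖₁ - ‖(|Ax| - |Ay|)_T‖₁ ≤ ‖|Ax| - b‖₁ - ‖|Ay| - b‖₁ + 2 σ_L(y)`,
and the range property `‖·_T‖₁ ≤ ψ ‖·_{Tᶜ}‖₁` turns this into a bound on the whole sum.
-/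

theorem exists_card_eq_sum_compl_eq_sigmaL {m L : ℕ} (hL : L ≤ m) (v : Fin m → ℝ) :
    ∃ T : Finset (Fin m), T.card = L ∧ ∑ i ∈ Tᶜ, |v i| = sigmaL L v := by
  have : Nonempty {T : Finset (Fin m) // T.card = L} := by
    obtain ⟨T, -, hT⟩ := exists_subset_card_eq (s := (univ : Finset (Fin m))) (by simpa using hL)
    exact ⟨⟨T, hT⟩⟩
  obtain ⟨⟨T, hT⟩, hmin⟩ := exists_eq_ciInf_of_finite
    (f := fun T : {T : Finset (Fin m) // T.card = L} => ∑ i ∈ (T : Finset (Fin m))ᶜ, |v i|)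
  exact ⟨T, hT, hmin⟩

theorem sum_compl_abs_sub_sub_sum_abs_sub_le {ι : Type*} [Fintype ι] [DecidableEq ι]
    (f g b : ι → ℝ) (T : Finset ι) :
    ∑ i ∈ Tᶜ, |f i - g i| - ∑ i ∈ T, |f i - g i| ≤
      ∑ i, |f i - b i| - ∑ i, |g i - b i| + 2 * ∑ i ∈ Tᶜ, |g i - b i| := by
  have on_T : ∑ i ∈ T, (|g i - b i| - |f i - b i|) ≤ ∑ i ∈ T, |f i - g i| :=
    sum_le_sum fun i _ => by
      simpa [abs_sub_comm (f i)] using abs_sub_abs_le_abs_sub (g i - b i) (f i - b i)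
  have off_T : ∑ i ∈ Tᶜ, (|f i - g i| - |g i - b i|) ≤ ∑ i ∈ Tᶜ, |f i - b i| :=
    sum_le_sum fun i _ => by
      linarith [abs_sub_le (f i) (b i) (g i), abs_sub_comm (b i) (g i)]
  rw [sum_sub_distrib] at on_T off_T
  rw [← sum_add_sum_compl T fun i => |f i - b i|, ← sum_add_sum_compl T fun i => |g i - b i|]
  linarith

theorem add_le_div_mul_of_le_mul_of_sub_le {S₁ S₂ R ψ : ℝ} (hψ0 : 0 ≤ ψ) (hψ1 : ψ < 1)
    (hS : S₁ ≤ ψ * S₂) (hR : S₂ - S₁ ≤ R) :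
    S₁ + S₂ ≤ (1 + ψ) / (1 - ψ) * R := by
  have hS₂ : S₂ ≤ R / (1 - ψ) := by
    rw [le_div_iff₀ (by linarith)]
    linarith
  calc S₁ + S₂ ≤ (1 + ψ) * S₂ := by linarith
    _ ≤ (1 + ψ) * (R / (1 - ψ)) := by gcongr
    _ = (1 + ψ) / (1 - ψ) * R := by ring

theorem stmt_1_general (m n : ℕ)
    (A : Fin m → Fin n → ℝ) (b : Fin m → ℝ)
    (L : ℕ) (hLm : L < m)
    (ψ : ℝ) (hψ0 : 0 < ψ) (hψ1 : ψ < 1)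
    (hARP : ∀ (x y : Fin n → ℝ) (T : Finset (Fin m)), T.card ≤ L →
      ∑ i ∈ T, |abs (∑ j, A i j * x j) - abs (∑ j, A i j * y j)| ≤
        ψ * ∑ i ∈ Tᶜ, |abs (∑ j, A i j * x j) - abs (∑ j, A i j * y j)|) :
    ∀ x y : Fin n → ℝ,
      ∑ i, |abs (∑ j, A i j * x j) - abs (∑ j, A i j * y j)| ≤
        ((1 + ψ) / (1 - ψ)) *
          ((∑ i, |abs (∑ j, A i j * x j) - b i|) - (∑ i, |abs (∑ j, A i j * y j) - b i|)
            + 2 * sigmaL L (fun i => abs (∑ j, A i j * y j) - b i)) := by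
  intro x y
  obtain ⟨T, hT, hσ⟩ := exists_card_eq_sum_compl_eq_sigmaL hLm.le
    fun i => |∑ j, A i j * y j| - b i
  rw [← sum_add_sum_compl T, ← hσ]
  exact add_le_div_mul_of_le_mul_of_sub_le hψ0.le hψ1 (hARP x y T hT.le)
    (sum_compl_abs_sub_sub_sum_abs_sub_le _ _ b T)

theorem stmt_1 (m n : ℕ) (hm : 0 < m) (hn : 0 < n)
    (A : Fin m → Fin n → ℝ) (b : Fin m → ℝ)
    (L : ℕ) (hL0 : 0 < L) (hLm : L < m)
    (ψ : ℝ) (hψ0 : 0 < ψ) (hψ1 : ψ < 1)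
    (hARP : ∀ (x y : Fin n → ℝ) (T : Finset (Fin m)), T.card ≤ L →
      ∑ i ∈ T, |abs (∑ j, A i j * x j) - abs (∑ j, A i j * y j)| ≤
        ψ * ∑ i ∈ Tᶜ, |abs (∑ j, A i j * x j) - abs (∑ j, A i j * y j)|) :
    ∀ x y : Fin n → ℝ,
      ∑ i, |abs (∑ j, A i j * x j) - abs (∑ j, A i j * y j)| ≤
        ((1 + ψ) / (1 - ψ)) *
          ((∑ i, |abs (∑ j, A i j * x j) - b i|) - (∑ i, |abs (∑ j, A i j * y j) - b i|)
            + 2 * sigmaL L (fun i => abs (∑ j, A i j * y j) - b i)) :=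
  stmt_1_general m n A b L hLm ψ hψ0 hψ1 hARP
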